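/- arXiv:2504.06044 — 3 statements merged into one kernel-verified Lean document; each statement's English description precedes it below -/
import Mathlib

section
/- Let f be a nonzero polynomial in n variables over a field F with individual degree at most d. For a finite set S ⊆ F, if a point is chosen uniformly at random from S^n, the probability that f vanishes at this point is at most 1 - (1 - d/|S|)^n. -/
/-!
Expand `f` in its first variable. The leading coefficient `g` is a nonzero polynomial in the
remaining variables obeying the same individual-degree bound, so by induction it is nonzero on at
least `(|S| - d)^(n-1)` points of `S^(n-1)`. Over each such point `f` restricts to a nonzero
univariate polynomial of degree at most `d`, which is nonzero on at least `|S| - d` points of `S`.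
Hence `f` is nonzero on at least `(|S| - d)^n` points of `S^n`.
-/

open Finset

lemma Fin.card_filter_piFinset_succ {α : Type*} {n : ℕ} (S : Fin (n + 1) → Finset α)
    (P : (Fin (n + 1) → α) → Prop) [DecidablePred P] :
    #{x ∈ Fintype.piFinset S | P x} =
      ∑ t ∈ Fintype.piFinset (Fin.tail S), #{x₀ ∈ S 0 | P (Fin.cons x₀ t)} := by
  have hpi : Fintype.piFinset S =
      (S 0 ×ˢ Fintype.piFinset (Fin.tail S)).map (Fin.consEquiv fun _ => α).toEmbedding := by
    simpa using filter_piFinset_eq_map_consEquiv (α := fun _ => α) S fun _ => True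
  rw [hpi, filter_map, card_map, card_filter, sum_product_right]
  simp_rw [card_filter]
  rfl

namespace Polynomial

variable {R : Type*} [CommRing R] [IsDomain R] [DecidableEq R]

lemma card_sub_natDegree_le_card_filter_eval_ne_zero {p : R[X]} (hp : p ≠ 0) (S : Finset R) :
    #S - p.natDegree ≤ #{x ∈ S | p.eval x ≠ 0} := by
  have hroots : #{x ∈ S | p.eval x = 0} ≤ p.natDegree :=
    card_le_degree_of_subset_roots fun x hx => by
      simp only [Finset.filter_val, Multiset.mem_filter] at hx
      exact (mem_roots hp).2 hx.2
  have hsplit : #{x ∈ S | p.eval x = 0} + #{x ∈ S | p.eval x ≠ 0} = #S :=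
    card_filter_add_card_filter_not _
  omega

end Polynomial

namespace MvPolynomial

variable {R : Type*} [CommRing R] [IsDomain R] [DecidableEq R]

lemma card_sub_degreeOf_le_card_filter_eval_cons_ne_zero {n : ℕ}
    {f : MvPolynomial (Fin (n + 1)) R} {t : Fin n → R}
    (ht : eval t (finSuccEquiv R n f).leadingCoeff ≠ 0) (S : Finset R) :
    #S - f.degreeOf 0 ≤ #{x₀ ∈ S | eval (Fin.cons x₀ t) f ≠ 0} := by
  set q := (finSuccEquiv R n f).map (eval t)
  have hlc : q.leadingCoeff ≠ 0 := by
    rwa [Polynomial.leadingCoeff_map_of_leadingCoeff_ne_zero _ ht]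
  have hdeg : q.natDegree ≤ f.degreeOf 0 :=
    natDegree_finSuccEquiv f ▸ Polynomial.natDegree_map_le
  simp only [eval_eq_eval_mv_eval']
  exact (Nat.sub_le_sub_left hdeg _).trans
    (Polynomial.card_sub_natDegree_le_card_filter_eval_ne_zero
      (Polynomial.leadingCoeff_ne_zero.1 hlc) S)

lemma prod_card_sub_le_card_filter_eval_ne_zero {n : ℕ} {f : MvPolynomial (Fin n) R} (hf : f ≠ 0)
    (S : Fin n → Finset R) (d : Fin n → ℕ) (hdeg : ∀ i, f.degreeOf i ≤ d i) :
    ∏ i, (#(S i) - d i) ≤ #{x ∈ Fintype.piFinset S | eval x f ≠ 0} := by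
  induction n with
  | zero =>
    rw [f.eq_C_of_isEmpty] at hf ⊢
    simp [C_ne_zero.mp hf]
  | succ n ih =>
    set g := (finSuccEquiv R n f).leadingCoeff
    have hg : g ≠ 0 := by simpa [g] using hf
    have hgdeg (i : Fin n) : g.degreeOf i ≤ d i.succ :=
      (degreeOf_coeff_finSuccEquiv f i _).trans (hdeg i.succ)
    calc ∏ i, (#(S i) - d i)
        = (#(S 0) - d 0) * ∏ i : Fin n, (#(S i.succ) - d i.succ) := Fin.prod_univ_succ _
      _ ≤ (#(S 0) - d 0) * #{t ∈ Fintype.piFinset (Fin.tail S) | eval t g ≠ 0} :=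
          Nat.mul_le_mul_left _ (ih hg _ _ hgdeg)
      _ = ∑ t ∈ Fintype.piFinset (Fin.tail S) with eval t g ≠ 0, (#(S 0) - d 0) := by
          rw [sum_const, smul_eq_mul, mul_comm]
      _ ≤ ∑ t ∈ Fintype.piFinset (Fin.tail S) with eval t g ≠ 0,
            #{x₀ ∈ S 0 | eval (Fin.cons x₀ t) f ≠ 0} :=
          sum_le_sum fun t ht => (Nat.sub_le_sub_left (hdeg 0) _).trans
            (card_sub_degreeOf_le_card_filter_eval_cons_ne_zero (mem_filter.1 ht).2 _)
      _ ≤ ∑ t ∈ Fintype.piFinset (Fin.tail S), #{x₀ ∈ S 0 | eval (Fin.cons x₀ t) f ≠ 0} :=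
          sum_le_sum_of_subset (filter_subset _ _)
      _ = #{x ∈ Fintype.piFinset S | eval x f ≠ 0} :=
          (Fin.card_filter_piFinset_succ S fun x => eval x f ≠ 0).symm

lemma card_filter_eval_eq_zero_add_pow_le {n d : ℕ} {f : MvPolynomial (Fin n) R} (hf : f ≠ 0)
    (hdeg : ∀ i, f.degreeOf i ≤ d) (S : Finset R) :
    #{x ∈ Fintype.piFinset fun _ : Fin n => S | eval x f = 0} + (#S - d) ^ n ≤ #S ^ n := by
  have hnonzero := prod_card_sub_le_card_filter_eval_ne_zero hf (fun _ => S) (fun _ => d) hdeg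
  have hsplit : #{x ∈ Fintype.piFinset fun _ : Fin n => S | eval x f = 0}
      + #{x ∈ Fintype.piFinset fun _ : Fin n => S | eval x f ≠ 0} = #S ^ n :=
    (card_filter_add_card_filter_not _).trans (Fintype.card_piFinset_const S n)
  simp only [prod_const, card_univ, Fintype.card_fin] at hnonzero
  omega

end MvPolynomial

/-- Schwartz–Zippel (individual degree, probabilistic version): for a nonzero `n`-variate
polynomial `f` of individual degree at most `d` and a finite nonempty set `S ⊆ F` with
`|S| ≥ d`, the fraction of points of the grid `S^n` where `f` vanishes is at most
`1 - (1 - d/|S|)^n`. -/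
theorem schwartz_zippel_individual_degree_prob
    {F : Type*} [Field F] [DecidableEq F] {n d : ℕ}
    (f : MvPolynomial (Fin n) F) (hf : f ≠ 0)
    (hdeg : ∀ i : Fin n, f.degreeOf i ≤ d)
    (S : Finset F) (hne : S.Nonempty) (hdS : d ≤ S.card) :
    (((Fintype.piFinset fun _ : Fin n => S).filter
        (fun a => MvPolynomial.eval a f = 0)).card : ℝ) / ((S.card : ℝ) ^ n)
      ≤ 1 - (1 - (d : ℝ) / (S.card : ℝ)) ^ n := by
  have hS : (0 : ℝ) < #S := by exact_mod_cast hne.card_pos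
  have hzeros := MvPolynomial.card_filter_eval_eq_zero_add_pow_le hf hdeg S
  rw [← Nat.cast_le (α := ℝ)] at hzeros
  push_cast [Nat.cast_sub hdS] at hzeros
  rw [div_le_iff₀ (by positivity), sub_mul, one_mul, ← mul_pow, sub_mul, one_mul,
    div_mul_cancel₀ _ hS.ne']
  linarith
end

section
/- For every m, n ∈ ℕ with n < 2^m and every a < m, there exists a family of sets S_1,...,S_n ⊆ [ℓ] with ℓ = O(n^{1/a} · m^2 / a) such that |S_i| = m for every i, and |S_i ∩ S_j| ≤ a for every i < j. -/
/-!
Greedy construction. Write `b = a + 1`. An `m`-subset `t` of `[ℓ]` meets some earlier `Sᵢ` in more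
than `a` points iff it contains one of the `C(m, b)` `b`-subsets of `Sᵢ`, and each of those lies in
`C(ℓ - b, m - b)` sets of size `m`. Since `C(ℓ, m) C(m, b) = C(ℓ, b) C(ℓ - b, m - b)`, a new set can
be added as long as `n C(m, b)² < C(ℓ, b)`. From `b! C(m, b) ≤ mᵇ`, `(ℓ - b + 1)ᵇ ≤ b! C(ℓ, b)` and
`bᵇ ≤ 3ᵇ b!`, this holds once `3 m² s ≤ b (ℓ - b + 1)` for some `s` with `n < sᵇ`; taking
`s ≈ n^{1/a}` gives `ℓ = O(n^{1/a} m² / a)`.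
-/

open Finset Fintype Nat

section Design

variable {ι α : Type*} [DecidableEq α]

def IsNWDesign (m a : ℕ) (S : ι → Finset α) : Prop :=
  (∀ i, #(S i) = m) ∧ Pairwise fun i j => #(S i ∩ S j) ≤ a

theorem IsNWDesign.cons {n m a : ℕ} {S : Fin n → Finset α} (hS : IsNWDesign m a S)
    {t : Finset α} (ht : #t = m) (hSt : ∀ i, #(S i ∩ t) ≤ a) :
    IsNWDesign m a (Fin.cons t S : Fin (n + 1) → Finset α) := by
  refine ⟨Fin.cases ht hS.1, Fin.cases (Fin.cases (fun h => (h rfl).elim) fun j _ => ?_)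
    fun i => Fin.cases (fun _ => hSt i) fun j hij => hS.2 (ne_of_apply_ne Fin.succ hij)⟩
  simpa [inter_comm] using hSt j

end Design

section Counting

variable {α : Type*} [Fintype α] [DecidableEq α]

theorem card_filter_superset_le (A : Finset α) (m : ℕ) :
    #{t ∈ powersetCard m univ | A ⊆ t} ≤ (card α - #A).choose (m - #A) :=
  calc #{t ∈ powersetCard m univ | A ⊆ t}
      ≤ #((powersetCard (m - #A) Aᶜ).image (A ∪ ·)) := by
        refine card_le_card fun t ht => ?_
        obtain ⟨ht, hAt⟩ := mem_filter.1 ht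
        refine mem_image.2 ⟨t \ A, mem_powersetCard.2 ⟨?_, ?_⟩, union_sdiff_of_subset hAt⟩
        · simp [sdiff_eq_inter_compl]
        · rw [card_sdiff_of_subset hAt, (mem_powersetCard.1 ht).2]
    _ ≤ #(powersetCard (m - #A) Aᶜ) := card_image_le
    _ = (card α - #A).choose (m - #A) := by rw [card_powersetCard, card_compl]

theorem card_filter_exists_lt_card_inter_le {ι : Type*} [Fintype ι] (S : ι → Finset α) {m a : ℕ}
    (hS : ∀ i, #(S i) = m) :
    #{t ∈ powersetCard m univ | ∃ i, a < #(S i ∩ t)}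
      ≤ card ι * (m.choose (a + 1) * (card α - (a + 1)).choose (m - (a + 1))) := by
  calc #{t ∈ powersetCard m univ | ∃ i, a < #(S i ∩ t)}
      ≤ #(univ.biUnion fun i => (powersetCard (a + 1) (S i)).biUnion
          fun A => {t ∈ powersetCard m univ | A ⊆ t}) := by
        refine card_le_card fun t ht => ?_
        obtain ⟨ht, i, hi⟩ := mem_filter.1 ht
        obtain ⟨A, hA, hAcard⟩ := exists_subset_card_eq (Nat.succ_le_of_lt hi)
        simp only [mem_biUnion, mem_univ, true_and, mem_filter]
        exact ⟨i, A, mem_powersetCard.2 ⟨hA.trans inter_subset_left, hAcard⟩, ht,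
          hA.trans inter_subset_right⟩
    _ ≤ card ι * (m.choose (a + 1) * (card α - (a + 1)).choose (m - (a + 1))) := by
      refine card_biUnion_le_card_mul _ _ _ fun i _ => ?_
      refine (card_biUnion_le_card_mul _ _ _ fun A hA => ?_).trans_eq
        (by rw [card_powersetCard, hS])
      simpa [(mem_powersetCard.1 hA).2] using card_filter_superset_le A m

end Counting

theorem pow_le_three_pow_mul_factorial (b : ℕ) : b ^ b ≤ 3 ^ b * b ! := by
  have h : (b : ℝ) ^ b / b ! ≤ 3 ^ b :=
    (Real.pow_div_factorial_le_exp _ b.cast_nonneg b).trans <| by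
      rw [← Real.exp_one_pow]
      exact pow_le_pow_left₀ (Real.exp_pos 1).le (Real.exp_one_lt_d9.le.trans (by norm_num)) b
  rw [div_le_iff₀ (by positivity)] at h
  exact_mod_cast h

theorem pow_mul_sq_choose_le_choose {b k m s : ℕ} (h : 3 * m ^ 2 * s ≤ b * (k + 1)) :
    s ^ b * m.choose b ^ 2 ≤ (b + k).choose b := by
  have hm : b ! * m.choose b ≤ m ^ b := by
    rw [← descFactorial_eq_factorial_mul_choose]; exact descFactorial_le_pow m b
  have hk : (k + 1) ^ b ≤ b ! * (b + k).choose b := by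
    rw [← descFactorial_eq_factorial_mul_choose]
    simpa [show b + k + 1 - b = k + 1 by omega] using pow_sub_le_descFactorial (b + k) b
  refine Nat.le_of_mul_le_mul_left ?_ (by positivity : 0 < 3 ^ b * b ! ^ 2)
  calc 3 ^ b * b ! ^ 2 * (s ^ b * m.choose b ^ 2)
      = 3 ^ b * s ^ b * (b ! * m.choose b) ^ 2 := by ring
    _ ≤ 3 ^ b * s ^ b * (m ^ b) ^ 2 := by gcongr
    _ = (3 * m ^ 2 * s) ^ b := by ring
    _ ≤ (b * (k + 1)) ^ b := by gcongr
    _ = b ^ b * (k + 1) ^ b := mul_pow _ _ _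
    _ ≤ 3 ^ b * b ! * (b ! * (b + k).choose b) := by gcongr; exact pow_le_three_pow_mul_factorial b
    _ = 3 ^ b * b ! ^ 2 * (b + k).choose b := by ring

theorem mul_choose_mul_choose_lt_choose {n ℓ m b : ℕ} (hbm : b ≤ m) (hmℓ : m ≤ ℓ)
    (h : n * m.choose b ^ 2 < ℓ.choose b) :
    n * (m.choose b * (ℓ - b).choose (m - b)) < ℓ.choose m := by
  refine Nat.lt_of_mul_lt_mul_right (a := m.choose b) ?_
  calc n * (m.choose b * (ℓ - b).choose (m - b)) * m.choose b
      = n * m.choose b ^ 2 * (ℓ - b).choose (m - b) := by ring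
    _ < ℓ.choose b * (ℓ - b).choose (m - b) :=
      Nat.mul_lt_mul_of_pos_right h (choose_pos (Nat.sub_le_sub_right hmℓ b))
    _ = ℓ.choose m * m.choose b := (choose_mul hbm).symm

section Greedy

variable {α : Type*} [Fintype α] [DecidableEq α]

theorem exists_card_eq_forall_card_inter_le {ι : Type*} [Fintype ι] (S : ι → Finset α) {m a : ℕ}
    (hS : ∀ i, #(S i) = m) (ham : a < m) (hmα : m ≤ card α)
    (h : card ι * m.choose (a + 1) ^ 2 < (card α).choose (a + 1)) :
    ∃ t : Finset α, #t = m ∧ ∀ i, #(S i ∩ t) ≤ a := by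
  have hbad : #{t ∈ powersetCard m univ | ∃ i, a < #(S i ∩ t)}
      < #(powersetCard m (univ : Finset α)) := by
    rw [card_powersetCard, Finset.card_univ]
    exact (card_filter_exists_lt_card_inter_le S hS).trans_lt
      (mul_choose_mul_choose_lt_choose ham hmα h)
  obtain ⟨t, ht, hgood⟩ := exists_mem_notMem_of_card_lt_card hbad
  exact ⟨t, (mem_powersetCard.1 ht).2, by simpa [ht] using hgood⟩

theorem exists_isNWDesign_of_mul_sq_choose_lt {m a : ℕ} (ham : a < m) :
    ∀ {n : ℕ}, n * m.choose (a + 1) ^ 2 < (card α).choose (a + 1) →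
      ∃ S : Fin n → Finset α, IsNWDesign m a S
  | 0, _ => ⟨Fin.elim0, fun i => i.elim0, fun i => i.elim0⟩
  | n + 1, h => by
    have hn : n * m.choose (a + 1) ^ 2 < (card α).choose (a + 1) :=
      (Nat.mul_le_mul_right _ n.le_succ).trans_lt h
    -- `h` gives `C(m, a + 1) < C(card α, a + 1)`, and `C(·, a + 1)` is monotone.
    have hmα : m ≤ card α := by
      by_contra! hlt
      have hpos : 0 < m.choose (a + 1) := choose_pos ham
      have := choose_le_choose (a + 1) hlt.le
      nlinarith
    obtain ⟨S, hS⟩ := exists_isNWDesign_of_mul_sq_choose_lt ham hn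
    obtain ⟨t, ht, hSt⟩ := exists_card_eq_forall_card_inter_le S hS.1 ham hmα (by simpa using hn)
    exact ⟨_, hS.cons ht hSt⟩

end Greedy

theorem exists_lt_pow_le_two_mul_rpow {n a : ℕ} (hn : 0 < n) (ha : a ≠ 0) :
    ∃ s : ℕ, n < s ^ a ∧ (s : ℝ) ≤ 2 * (n : ℝ) ^ (a : ℝ)⁻¹ := by
  set x := (n : ℝ) ^ (a : ℝ)⁻¹
  have hx : 1 ≤ x := Real.one_le_rpow (by exact_mod_cast hn) (by positivity)
  refine ⟨⌊x⌋₊ + 1, ?_, ?_⟩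
  · have : (n : ℝ) < ((⌊x⌋₊ + 1 : ℕ) : ℝ) ^ a :=
      calc (n : ℝ) = x ^ a := (Real.rpow_inv_natCast_pow n.cast_nonneg ha).symm
        _ < _ := pow_lt_pow_left₀ (by exact_mod_cast Nat.lt_floor_add_one x) (by positivity) ha
    exact_mod_cast this
  · push_cast
    linarith [Nat.floor_le (zero_le_one.trans hx)]

theorem cast_add_mul_sq_div_le {a m s : ℕ} {x : ℝ} (ha : 0 < a) (ham : a < m) (hx : 1 ≤ x)
    (hs : (s : ℝ) ≤ 2 * x) :
    ((a + 1 + 3 * m ^ 2 * s / (a + 1) : ℕ) : ℝ) ≤ 7 * x * m ^ 2 / a := by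
  have ha' : (0 : ℝ) < a := by exact_mod_cast ha
  have ham' : (a : ℝ) + 1 ≤ m := by exact_mod_cast ham
  have hm : (m : ℝ) ≤ m ^ 2 / a := by
    rw [le_div_iff₀ ha', sq]; exact mul_le_mul_of_nonneg_left (by linarith) (by linarith)
  push_cast
  calc (a : ℝ) + 1 + ((3 * m ^ 2 * s / (a + 1) : ℕ) : ℝ)
      ≤ m + 3 * m ^ 2 * s / (a + 1) := by
        gcongr
        exact_mod_cast Nat.cast_div_le
    _ ≤ x * (m ^ 2 / a) + 3 * m ^ 2 * (2 * x) / a := by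
        gcongr
        · nlinarith
        · linarith
    _ = 7 * x * m ^ 2 / a := by ring

/-- Existence of Nisan–Wigderson combinatorial designs: for every `m, n` with
`n < 2^m` and every `0 < a < m`, there exist `n` subsets `S₁,…,Sₙ` of a universe
of size `ℓ = O(n^{1/a} · m² / a)`, each of size exactly `m`, with pairwise
intersections of size at most `a`. -/
theorem nisan_wigderson_design_exists :
    ∃ C : ℕ, ∀ m n a : ℕ, 0 < a → a < m → n < 2 ^ m →
      ∃ (ℓ : ℕ) (S : Fin n → Finset (Fin ℓ)),
        (ℓ : ℝ) ≤ (C : ℝ) * (n : ℝ) ^ ((a : ℝ)⁻¹) * (m : ℝ) ^ 2 / (a : ℝ) ∧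
        (∀ i : Fin n, (S i).card = m) ∧
        (∀ i j : Fin n, i ≠ j → (S i ∩ S j).card ≤ a) := by
  refine ⟨7, fun m n a ha ham _ => ?_⟩
  rcases Nat.eq_zero_or_pos n with rfl | hn
  · exact ⟨0, Fin.elim0, by simp [ha.ne'], fun i => i.elim0, fun i => i.elim0⟩
  obtain ⟨s, hns, hs⟩ := exists_lt_pow_le_two_mul_rpow hn ha.ne'
  have hs0 : s ≠ 0 := by rintro rfl; simp [ha.ne'] at hns
  have hns' : n < s ^ (a + 1) := hns.trans_le (Nat.pow_le_pow_right (by omega) a.le_succ)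
  set k := 3 * m ^ 2 * s / (a + 1)
  have hcount : n * m.choose (a + 1) ^ 2 < (a + 1 + k).choose (a + 1) :=
    (Nat.mul_lt_mul_of_pos_right hns' (pow_pos (choose_pos ham) 2)).trans_le
      (pow_mul_sq_choose_le_choose (Nat.lt_mul_div_succ _ a.succ_pos).le)
  obtain ⟨S, hS⟩ := exists_isNWDesign_of_mul_sq_choose_lt (α := Fin (a + 1 + k)) ham
    (by simpa using hcount)
  have hx : 1 ≤ (n : ℝ) ^ (a : ℝ)⁻¹ := Real.one_le_rpow (by exact_mod_cast hn) (by positivity)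
  exact ⟨a + 1 + k, S, cast_add_mul_sq_div_le ha ham hx hs, hS.1, fun i j hij => hS.2 hij⟩
end

section
/- Suppose F is a field, f ∈ F[x_1,...,x_n] is nonzero of characteristic-p field with p prime, and f = h^{p^e} for some polynomial h but f is not a p^{e+1}-th power. Write f = Σ_j f_j · x_i^j as a polynomial in a variable x_i on which f depends. Then f_j ≠ 0 implies p^e divides j, and there exists a nonzero index j with f_j ≠ 0 and p^{e+1} ∤ j for some choice of variable x_i. -/
open MvPolynomial

section Aux

variable {F : Type*} [Field F] {σ : Type*}

private lemma my_expand_monomial_smul {R : Type*} [CommSemiring R] (q : ℕ) (hq : q ≠ 0)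
    (d : σ →₀ ℕ) (r : R) :
    expand q (monomial d r) = monomial (q • d) r := by
  rw [monomial_eq, monomial_eq, map_mul, expand_C]
  congr 1
  rw [Finsupp.prod, Finsupp.prod, map_prod]
  rw [Finsupp.support_smul_eq hq]
  apply Finset.prod_congr rfl
  intro i _
  rw [map_pow, expand_X, Finsupp.smul_apply, smul_eq_mul, ← pow_mul, mul_comm]

private lemma my_expand_expand {R : Type*} [CommSemiring R] (a b : ℕ)
    (g : MvPolynomial σ R) : expand a (expand b g) = expand (a * b) g := by
  have : (expand a).comp (expand b) = (expand (a * b) : MvPolynomial σ R →ₐ[R] _) := by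
    apply MvPolynomial.algHom_ext
    intro i
    simp [expand_X, ← pow_mul]
  exact AlgHom.congr_fun this g

private lemma my_pow_char (p : ℕ) [ExpChar F p] (hp : p.Prime)
    (g : MvPolynomial σ F) : g ^ p = expand p (map (frobenius F p) g) := by
  haveI : CharP F p := by
    rcases ‹ExpChar F p› with _ | ⟨_⟩
    · exact absurd hp Nat.not_prime_one
    · assumption
  haveI := Fact.mk hp
  induction g using MvPolynomial.induction_on with
  | C a => rw [map_C, expand_C, frobenius_def, ← C_pow]
  | add f g hf hg => rw [add_pow_char, map_add, map_add, hf, hg]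
  | mul_X f i hf => rw [mul_pow, hf, map_mul, map_mul, map_X, expand_X]

private lemma my_pow_char_pow (p : ℕ) [ExpChar F p] (hp : p.Prime) (e : ℕ)
    (g : MvPolynomial σ F) :
    g ^ p ^ e = expand (p ^ e) (map (iterateFrobenius F p e) g) := by
  induction e with
  | zero =>
    simp only [pow_zero, pow_one, expand_one_apply, iterateFrobenius_zero]
    rw [MvPolynomial.map_id]
  | succ e ih =>
    have h1 : g ^ p ^ (e + 1) = (g ^ p ^ e) ^ p := by
      rw [← pow_mul, pow_succ]
    rw [h1, ih, my_pow_char p hp, map_expand, my_expand_expand,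
      MvPolynomial.map_map]
    have h2 : p * p ^ e = p ^ (e + 1) := (pow_succ' p e).symm
    have h3 : (frobenius F p).comp (iterateFrobenius F p e) = iterateFrobenius F p (e + 1) := by
      rw [← iterateFrobenius_one F p, ← iterateFrobenius_add, add_comm]
    rw [h2, h3]

private lemma my_support_expand {R : Type*} [CommSemiring R] (q : ℕ) (hq : q ≠ 0)
    (g : MvPolynomial σ R) {m : σ →₀ ℕ} (hm : m ∈ (expand q g).support) (i : σ) :
    q ∣ m i := by
  classical
  have : expand q g = ∑ d ∈ g.support, monomial (q • d) (coeff d g) := by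
    conv_lhs => rw [g.as_sum]
    rw [map_sum]
    exact Finset.sum_congr rfl fun d _ => my_expand_monomial_smul q hq d _
  rw [this] at hm
  have := MvPolynomial.support_sum hm
  simp only [Finset.mem_biUnion] at this
  obtain ⟨d, _, hd⟩ := this
  have := support_monomial_subset hd
  simp only [Finset.mem_singleton] at this
  subst this
  exact ⟨d i, by simp [mul_comm]⟩

end Aux

/-- Over a perfect field of prime characteristic `p`: if a nonzero polynomial `f` is a
`p^e`-th power but not a `p^(e+1)`-th power, then every exponent of every variable in
every monomial of `f` is divisible by `p^e`, and there is a variable `x_i` and a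
monomial of `f` whose `x_i`-exponent is not divisible by `p^(e+1)` (in particular that
exponent is nonzero, so `f` depends on `x_i`). -/
theorem pth_power_exponent_structure
    {F : Type*} [Field F] {n : ℕ} (p e : ℕ) [ExpChar F p] (hp : p.Prime)
    [PerfectRing F p]
    (f h : MvPolynomial (Fin n) F) (hf : f ≠ 0) (hpow : f = h ^ p ^ e)
    (hnot : ¬ ∃ h' : MvPolynomial (Fin n) F, f = h' ^ p ^ (e + 1)) :
    (∀ m ∈ f.support, ∀ i : Fin n, p ^ e ∣ m i) ∧
    ∃ i : Fin n, ∃ m ∈ f.support, ¬ p ^ (e + 1) ∣ m i := by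
  constructor
  · intro m hm i
    rw [hpow, my_pow_char_pow p hp e] at hm
    exact my_support_expand _ (pow_ne_zero _ hp.ne_zero) _ hm i
  · by_contra hcon
    push_neg at hcon
    apply hnot
    set q : ℕ := p ^ (e + 1) with hq
    have hq0 : q ≠ 0 := pow_ne_zero _ hp.ne_zero
    refine ⟨∑ m ∈ f.support, monomial (m.mapRange (· / q) (Nat.zero_div q))
      ((iterateFrobeniusEquiv F p (e + 1)).symm (coeff m f)), ?_⟩
    rw [my_pow_char_pow p hp (e + 1), map_sum, map_sum]
    conv_lhs => rw [f.as_sum]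
    apply Finset.sum_congr rfl
    intro m hm
    rw [map_monomial, my_expand_monomial_smul q hq0]
    have hcoef : iterateFrobenius F p (e + 1)
        ((iterateFrobeniusEquiv F p (e + 1)).symm (coeff m f)) = coeff m f := by
      rw [← coe_iterateFrobeniusEquiv]
      exact (iterateFrobeniusEquiv F p (e + 1)).apply_symm_apply _
    have hexp : q • m.mapRange (· / q) (Nat.zero_div q) = m := by
      ext i
      simp only [Finsupp.smul_apply, Finsupp.mapRange_apply, smul_eq_mul]
      exact Nat.mul_div_cancel' (hcon i m hm)
    rw [hcoef, hexp]
end
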